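/- arXiv:1410.3612 — 6 statements merged into one kernel-verified Lean document; each statement's English description precedes it below -/
import Mathlib

section
/- Let n ≥ 1, let S be a nonempty finite set of multi-indices in ℕⁿ, fix j ∈ {1, …, n}, and let M = max_{J∈S} J_j. Then there exists a natural number s such that the function of one real variable t ↦ (Σ_{J∈S} J_j · t^{J_j·s + Σ_{i≠j} J_i}) / (Σ_{J∈S} t^{J_j·s + Σ_{i≠j} J_i}) tends to M as t → +∞. -/
open Finset Filter Topology

/-!
Write `f_J(s) = J_j s + Σ_{i ≠ j} J_i`. Once `s` exceeds every `Σ_{i ≠ j} J_i`, the largest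
exponent `f_J(s)` is attained only at indices with `J_j = M`. Dividing numerator and denominator
by `t ^ max f_J(s)` turns both into polynomials in `t⁻¹`, whose values at `t⁻¹ = 0` are `M · k` and
`k`, where `k ≥ 1` is the number of indices attaining the maximal exponent.
-/

section PowerSums

variable {ι : Type*} (S : Finset ι) (e : ι → ℕ) (w : ι → ℝ)

theorem sum_mul_pow_eq_pow_sup_mul {t : ℝ} (ht : t ≠ 0) :
    ∑ i ∈ S, w i * t ^ e i = t ^ S.sup e * ∑ i ∈ S, w i * t⁻¹ ^ (S.sup e - e i) := by
  rw [mul_sum]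
  refine sum_congr rfl fun i hi => ?_
  have hsplit : t ^ S.sup e = t ^ e i * t ^ (S.sup e - e i) := by
    rw [← pow_add, Nat.add_sub_cancel' (le_sup hi)]
  rw [hsplit, inv_pow]
  field_simp

theorem tendsto_sum_mul_inv_pow_sup_sub :
    Tendsto (fun t : ℝ => ∑ i ∈ S, w i * t⁻¹ ^ (S.sup e - e i)) atTop
      (𝓝 (∑ i ∈ S with e i = S.sup e, w i)) := by
  have hcont : Continuous fun u : ℝ => ∑ i ∈ S, w i * u ^ (S.sup e - e i) := by fun_prop
  have hzero : ∑ i ∈ S, w i * (0 : ℝ) ^ (S.sup e - e i) = ∑ i ∈ S with e i = S.sup e, w i := by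
    rw [sum_filter]
    refine sum_congr rfl fun i hi => ?_
    rw [zero_pow_eq, mul_ite, mul_one, mul_zero]
    exact if_congr (Nat.sub_eq_zero_iff_le.trans ⟨(le_sup hi).antisymm, ge_of_eq⟩) rfl rfl
  have h := (hcont.tendsto 0).comp tendsto_inv_atTop_zero
  rwa [hzero] at h

theorem tendsto_sum_mul_pow_div_sum_pow (hS : S.Nonempty) {c : ℝ}
    (hc : ∀ i ∈ S, e i = S.sup e → w i = c) :
    Tendsto (fun t : ℝ => (∑ i ∈ S, w i * t ^ e i) / ∑ i ∈ S, t ^ e i) atTop (𝓝 c) := by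
  have hcard : (#{i ∈ S | e i = S.sup e} : ℝ) ≠ 0 := by
    obtain ⟨i, hi, hmax⟩ := exists_mem_eq_sup S hS e
    exact Nat.cast_ne_zero.mpr (card_ne_zero_of_mem (mem_filter.mpr ⟨hi, hmax.symm⟩))
  have hnum := tendsto_sum_mul_inv_pow_sup_sub S e w
  rw [sum_congr rfl fun i hi => hc i (mem_filter.mp hi).1 (mem_filter.mp hi).2, sum_const,
    nsmul_eq_mul] at hnum
  have hden := tendsto_sum_mul_inv_pow_sup_sub S e 1
  simp only [Pi.one_apply, one_mul, sum_const, nsmul_eq_mul, mul_one] at hden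
  have hlim := hnum.div hden hcard
  rw [mul_div_cancel_left₀ c hcard] at hlim
  refine hlim.congr' ?_
  filter_upwards [eventually_ne_atTop 0] with t ht
  have hden_eq := sum_mul_pow_eq_pow_sup_mul S e 1 ht
  simp only [Pi.one_apply, one_mul] at hden_eq
  rw [Pi.div_apply, sum_mul_pow_eq_pow_sup_mul S e w ht, hden_eq,
    mul_div_mul_left _ _ (pow_ne_zero _ ht)]

end PowerSums

theorem sup_eq_of_mul_add_eq_sup {ι : Type*} {S : Finset ι} {a b : ι → ℕ} {s : ℕ}
    (hb : ∀ i ∈ S, b i < s) {i : ι} (hi : i ∈ S)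
    (hmax : a i * s + b i = S.sup fun k => a k * s + b k) : a i = S.sup a := by
  refine (le_sup hi).antisymm ?_
  obtain ⟨k, hk, hka⟩ := exists_mem_eq_sup S ⟨i, hi⟩ a
  have hlt : a k * s < (a i + 1) * s :=
    calc a k * s ≤ a k * s + b k := Nat.le_add_right _ _
      _ ≤ a i * s + b i := hmax ▸ le_sup (f := fun k => a k * s + b k) hk
      _ < (a i + 1) * s := by rw [add_one_mul]; exact Nat.add_lt_add_left (hb i hi) _
  rw [hka]
  exact Nat.le_of_lt_succ (Nat.lt_of_mul_lt_mul_right hlt)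

theorem stmt_4_general (n : ℕ) (S : Finset (Fin n → ℕ)) (hS : S.Nonempty)
    (j : Fin n) (M : ℕ) (hM : M = S.sup fun J => J j) :
    ∃ s : ℕ, Tendsto
      (fun t : ℝ =>
        (∑ J ∈ S, (J j : ℝ) * t ^ (J j * s + ∑ i ∈ Finset.univ.erase j, J i)) /
          (∑ J ∈ S, t ^ (J j * s + ∑ i ∈ Finset.univ.erase j, J i)))
      atTop (nhds (M : ℝ)) := by
  set B := S.sup fun J => ∑ i ∈ univ.erase j, J i
  refine ⟨B + 1, tendsto_sum_mul_pow_div_sum_pow S _ _ hS fun J hJ hmax => ?_⟩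
  have hJ_max := sup_eq_of_mul_add_eq_sup (a := fun J => J j)
    (b := fun J => ∑ i ∈ univ.erase j, J i) (fun J hJ => Nat.lt_succ_of_le (le_sup hJ)) hJ hmax
  rw [hM]
  exact_mod_cast hJ_max

/-- Sharpness of the bound `max_{J∈S} J_j` for the ratio `(Σ J_j x^J)/(Σ x^J)`:
along the curve `x_i = t` (`i ≠ j`), `x_j = t^s` for a suitable natural number `s`,
the ratio tends to `M = max_{J∈S} J_j` as `t → +∞`. -/
theorem stmt_4 (n : ℕ) (hn : 1 ≤ n) (S : Finset (Fin n → ℕ)) (hS : S.Nonempty)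
    (j : Fin n) (M : ℕ) (hM : M = S.sup fun J => J j) :
    ∃ s : ℕ, Tendsto
      (fun t : ℝ =>
        (∑ J ∈ S, (J j : ℝ) * t ^ (J j * s + ∑ i ∈ Finset.univ.erase j, J i)) /
          (∑ J ∈ S, t ^ (J j * s + ∑ i ∈ Finset.univ.erase j, J i)))
      atTop (nhds (M : ℝ)) :=
  stmt_4_general n S hS j M hM
end

section
/- Let n ≥ 1, let S be a nonempty finite set of multi-indices in ℕⁿ, and fix j ∈ {1, …, n}. Then max_{J∈S} J_j is the least upper bound (supremum) of the set { (Σ_{J∈S} J_j · x^J) / (Σ_{J∈S} x^J) : x ∈ (0,∞)ⁿ }. -/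
/-! The ratio is an average of the values `J j` with positive weights `x ^ J`, hence at most
`M = max J j`. Along `x = Pi.mulSingle j t` it becomes `Σ J_j t ^ J_j / Σ t ^ J_j`; multiplying
numerator and denominator by `t⁻¹ ^ M` turns it into a quotient of polynomials in `u = t⁻¹` that is
continuous at `u = 0`, where only the terms with `J j = M` survive. So the ratio tends to `M`
as `t → ∞`. -/

open Finset Filter Topology

lemma sum_mul_div_sum_le {ι 𝕜 : Type*} [Field 𝕜] [LinearOrder 𝕜] [IsStrictOrderedRing 𝕜]
    {s : Finset ι} {a w : ι → 𝕜} {M : 𝕜}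
    (hw : ∀ k ∈ s, 0 ≤ w k) (hpos : 0 < ∑ k ∈ s, w k) (ha : ∀ k ∈ s, a k ≤ M) :
    (∑ k ∈ s, a k * w k) / ∑ k ∈ s, w k ≤ M := by
  rw [div_le_iff₀ hpos, mul_sum]
  exact sum_le_sum fun k hk => mul_le_mul_of_nonneg_right (ha k hk) (hw k hk)

section ExponentialSums

variable {ι : Type*} (s : Finset ι) (e : ι → ℕ)

lemma sum_mul_pow_div_sum_pow_eq (t : ℝ) (ht : t ≠ 0) :
    (∑ k ∈ s, (e k : ℝ) * t ^ e k) / ∑ k ∈ s, t ^ e k =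
      (∑ k ∈ s, (e k : ℝ) * t⁻¹ ^ (s.sup e - e k)) / ∑ k ∈ s, t⁻¹ ^ (s.sup e - e k) := by
  have hpow : ∀ k ∈ s, t⁻¹ ^ (s.sup e - e k) = t⁻¹ ^ s.sup e * t ^ e k := fun k hk => by
    rw [pow_sub₀ _ (inv_ne_zero ht) (le_sup hk), inv_pow t (e k), inv_inv]
  have hnum : ∑ k ∈ s, (e k : ℝ) * t⁻¹ ^ (s.sup e - e k) =
      t⁻¹ ^ s.sup e * ∑ k ∈ s, (e k : ℝ) * t ^ e k := by
    rw [mul_sum]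
    exact sum_congr rfl fun k hk => by rw [hpow k hk, mul_left_comm]
  rw [hnum, sum_congr rfl hpow, ← mul_sum, mul_div_mul_left _ _ (by positivity)]

lemma tendsto_sum_mul_pow_div_sum_pow_s5 (hs : s.Nonempty) :
    Tendsto (fun t : ℝ => (∑ k ∈ s, (e k : ℝ) * t ^ e k) / ∑ k ∈ s, t ^ e k) atTop
      (𝓝 ((s.sup e : ℕ) : ℝ)) := by
  set M := s.sup e
  set P : ℝ → ℝ := fun u => ∑ k ∈ s, u ^ (M - e k)
  set Q : ℝ → ℝ := fun u => ∑ k ∈ s, (e k : ℝ) * u ^ (M - e k)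
  obtain ⟨k₀, hk₀, hk₀M⟩ := s.exists_mem_eq_sup hs e
  have hP : 0 < P 0 := sum_pos' (fun k _ => by positivity) ⟨k₀, hk₀, by simp [M, hk₀M]⟩
  have hQ : Q 0 = M * P 0 := by
    simp only [Q, P, mul_sum]
    refine sum_congr rfl fun k hk => ?_
    rcases (le_sup hk : e k ≤ M).eq_or_lt with h | h
    · rw [h]
    · rw [zero_pow (Nat.sub_ne_zero_of_lt h), mul_zero, mul_zero]
  have hlim : Tendsto (fun u => Q u / P u) (𝓝 0) (𝓝 M) := by
    have : ContinuousAt (fun u => Q u / P u) 0 := by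
      simp only [Q, P]; fun_prop (disch := exact hP.ne')
    simpa [hQ, hP.ne'] using this.tendsto
  refine (hlim.comp tendsto_inv_atTop_zero).congr' ?_
  filter_upwards [eventually_gt_atTop 0] with t ht
  exact (sum_mul_pow_div_sum_pow_eq s e t ht.ne').symm

end ExponentialSums

lemma prod_mulSingle_pow {n : ℕ} (j : Fin n) (t : ℝ) (J : Fin n → ℕ) :
    ∏ i, Pi.mulSingle j t i ^ J i = t ^ J j := by
  rw [Fintype.prod_eq_single j fun i hi => by simp [Pi.mulSingle_eq_of_ne hi]]
  simp

theorem stmt_5_general (n : ℕ) (S : Finset (Fin n → ℕ)) (hS : S.Nonempty)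
    (j : Fin n) :
    IsLUB
      { r : ℝ | ∃ x : Fin n → ℝ, (∀ i, 0 < x i) ∧
          r = (∑ J ∈ S, (J j : ℝ) * ∏ i, x i ^ J i) / (∑ J ∈ S, ∏ i, x i ^ J i) }
      ((S.sup fun J => J j : ℕ) : ℝ) := by
  refine isLUB_of_mem_closure ?_ ?_
  · rintro r ⟨x, hx, rfl⟩
    have hpos : ∀ J ∈ S, 0 < ∏ i, x i ^ J i := fun J _ => prod_pos fun i _ => pow_pos (hx i) _
    exact sum_mul_div_sum_le (fun J hJ => (hpos J hJ).le) (sum_pos hpos hS)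
      fun J hJ => by exact_mod_cast le_sup (f := fun J => J j) hJ
  · refine mem_closure_of_tendsto (tendsto_sum_mul_pow_div_sum_pow_s5 S (fun J => J j) hS) ?_
    filter_upwards [eventually_gt_atTop 0] with t ht
    refine ⟨Pi.mulSingle j t, fun i => ?_, by simp only [prod_mulSingle_pow]⟩
    rcases eq_or_ne i j with rfl | hij
    · simpa
    · simp [Pi.mulSingle_eq_of_ne hij]

/-- `max_{J∈S} J_j` is the least upper bound of the set of values
`(Σ_{J∈S} J_j x^J)/(Σ_{J∈S} x^J)` for `x ∈ (0,∞)ⁿ`. -/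
theorem stmt_5 (n : ℕ) (hn : 1 ≤ n) (S : Finset (Fin n → ℕ)) (hS : S.Nonempty)
    (j : Fin n) :
    IsLUB
      { r : ℝ | ∃ x : Fin n → ℝ, (∀ i, 0 < x i) ∧
          r = (∑ J ∈ S, (J j : ℝ) * ∏ i, x i ^ J i) / (∑ J ∈ S, ∏ i, x i ^ J i) }
      ((S.sup fun J => J j : ℕ) : ℝ) :=
  stmt_5_general n S hS j
end

section
/- Let u₁ = (1,0), u₂ = (0,1), u₃ = (1,−1), u₄ = (−1,1), u₅ = (1,−2), u₆ = (0,−1) in ℤ² and λ₁ = 0, λ₂ = 0, λ₃ = −1, λ₄ = −1, λ₅ = −3, λ₆ = −3. Then 4 is the greatest element of the set { −Σ_{i=1}^{6} λ_i a_i : a = (a₁,…,a₆) ∈ ℕ⁶, Σ_{i=1}^{6} a_i u_i = (0,0) in ℤ², and 1 ≤ Σ_{i=1}^{6} a_i ≤ 3 } (it is an upper bound and it is attained, e.g. by a₂ = a₄ = a₅ = 1, a₁ = a₃ = a₆ = 0). -/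
/-!
The two coordinates of `Σ aᵢ uᵢ = 0` read `a₄ = a₁ + a₃ + a₅` and `a₁ + a₂ = a₅ + a₆`.
Substituting them, `-Σ λᵢ aᵢ = Σ aᵢ + (a₅ + a₆)` while `Σ aᵢ ≥ 2 (a₅ + a₆)`; with `Σ aᵢ ≤ 3`
this forces `a₅ + a₆ ≤ 1`, so the value is at most `4`, attained at `a₂ = a₄ = a₅ = 1`.
Indices here are the paper's: `aᵢ` is `a (i - 1)` in the code.
-/

open Finset

namespace HirzebruchExample

def normals : Fin 6 → ℤ × ℤ := ![(1, 0), (0, 1), (1, -1), (-1, 1), (1, -2), (0, -1)]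

def levels : Fin 6 → ℤ := ![0, 0, -1, -1, -3, -3]

theorem sum_smul_normals_eq_zero_iff (a : Fin 6 → ℕ) :
    (∑ i, (a i : ℤ) • normals i) = (0, 0) ↔
      a 3 = a 0 + a 2 + a 4 ∧ a 0 + a 1 = a 4 + a 5 := by
  simp only [normals, Fin.sum_univ_six, Prod.ext_iff, Prod.smul_mk, smul_eq_mul,
    Prod.fst_add, Prod.snd_add, Matrix.cons_val]
  omega

theorem neg_sum_levels_mul (a : Fin 6 → ℕ) :
    -∑ i, levels i * (a i : ℤ) = a 2 + a 3 + 3 * a 4 + 3 * a 5 := by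
  simp only [levels, Fin.sum_univ_six, Matrix.cons_val]
  ring

theorem pairing_le_four (a : Fin 6 → ℕ) (h₃ : a 3 = a 0 + a 2 + a 4)
    (h₀₁ : a 0 + a 1 = a 4 + a 5) (hsum : ∑ i, a i ≤ 3) :
    a 2 + a 3 + 3 * a 4 + 3 * a 5 ≤ 4 := by
  rw [Fin.sum_univ_six] at hsum
  omega

end HirzebruchExample

open HirzebruchExample in
/-- Computation of Lu's bound `Λ(Δ)/2π = 4` for the polytope of Example 1:
`4` is the greatest value of `-Σ λᵢ aᵢ` over `a ∈ ℕ⁶` with `Σ aᵢ uᵢ = 0` and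
`1 ≤ Σ aᵢ ≤ 3`. -/
theorem stmt_8 (u : Fin 6 → ℤ × ℤ) (lam : Fin 6 → ℤ)
    (hu : u = ![(1, 0), (0, 1), (1, -1), (-1, 1), (1, -2), (0, -1)])
    (hlam : lam = ![0, 0, -1, -1, -3, -3]) :
    IsGreatest
      { v : ℤ | ∃ a : Fin 6 → ℕ,
          (∑ i, (a i : ℤ) • u i) = (0, 0) ∧
          1 ≤ ∑ i, a i ∧ (∑ i, a i) ≤ 3 ∧
          v = -∑ i, lam i * (a i : ℤ) }
      4 := by
  obtain rfl : u = normals := hu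
  obtain rfl : lam = levels := hlam
  constructor
  · refine ⟨![0, 1, 0, 1, 1, 0], (sum_smul_normals_eq_zero_iff _).2 (by decide), by decide,
      by decide, ?_⟩
    rw [neg_sum_levels_mul]
    rfl
  · rintro v ⟨a, hbal, -, hsum, rfl⟩
    obtain ⟨h₃, h₀₁⟩ := (sum_smul_normals_eq_zero_iff a).1 hbal
    rw [neg_sum_levels_mul]
    exact_mod_cast pairing_le_four a h₃ h₀₁ hsum
end

section
/- For every natural number m ≥ 1, let u₁ = (1,0), u₂ = (0,1), u₃ = (−1,1), u₄ = (−1,0), u₅ = (0,−1), u₆ = (1,−1), u₇ = (2,−1) in ℝ² and λ₁ = 0, λ₂ = 0, λ₃ = −2, λ₄ = −4, λ₅ = −4, λ₆ = −2, λ₇ = −2m/(m+1). Then there exist no r > 0 and μ = (μ₁, μ₂) ∈ ℝ² such that r·(λ_i + ⟨μ, u_i⟩) ∈ {1, −1} for every i = 1, …, 7, where ⟨·,·⟩ is the standard inner product on ℝ². -/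
/-!
The normals come in three opposite pairs, `u₃ = -u₆`, `u₁ = -u₄`, `u₂ = -u₅`, so the two values
`r (λᵢ + ⟨μ, uᵢ⟩)` of a pair add up to `r (λᵢ + λⱼ) < 0`; two signs with negative sum are both `-1`.
The pair `u₃, u₆` forces `r = 1/2`, and then the other two pairs force `μ = (-2, -2)`. For the last
normal this leaves `r (λ₇ + ⟨μ, u₇⟩) = (λ₇ - 2) / 2`, which is `±1` only for `λ₇ ∈ {0, 4}`,
whereas `λ₇ = -2m/(m+1) < 0`.
-/

lemma eq_neg_one_of_add_neg {x y : ℝ} (hx : x ∈ ({1, -1} : Set ℝ)) (hy : y ∈ ({1, -1} : Set ℝ))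
    (h : x + y < 0) : x = -1 ∧ y = -1 := by
  rcases hx with rfl | rfl <;> rcases hy with rfl | rfl <;> norm_num at *

/-- For the normals and constants of the polytope `Δ(m)` of Example 2 (a Kähler class
on the projective plane blown up at three points and blown up again), for every
`m ≥ 1` there are no `r > 0` and `μ ∈ ℝ²` with `r (λᵢ + ⟨μ, uᵢ⟩) = ±1` for all
`i = 1, …, 7`; i.e. the Fano condition fails. -/
theorem stmt_9 (m : ℕ) (hm : 1 ≤ m) (u : Fin 7 → ℝ × ℝ) (lam : Fin 7 → ℝ)
    (hu : u = ![(1, 0), (0, 1), (-1, 1), (-1, 0), (0, -1), (1, -1), (2, -1)])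
    (hlam : lam = ![0, 0, -2, -4, -4, -2, -(2 * (m : ℝ)) / ((m : ℝ) + 1)]) :
    ¬ ∃ (r : ℝ) (μ : ℝ × ℝ), 0 < r ∧
        ∀ i : Fin 7,
          r * (lam i + (μ.1 * (u i).1 + μ.2 * (u i).2)) ∈ ({1, -1} : Set ℝ) := by
  subst hu hlam
  rintro ⟨r, ⟨a, b⟩, hr, h⟩
  simp only [Fin.forall_fin_succ, IsEmpty.forall_iff, and_true, Matrix.cons_val_zero,
    Matrix.cons_val_succ] at h
  obtain ⟨h₁, h₂, h₃, h₄, h₅, h₆, h₇⟩ := h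
  obtain rfl : r = 1 / 2 := by
    obtain ⟨h₃, h₆⟩ := eq_neg_one_of_add_neg h₃ h₆ (by nlinarith)
    linear_combination (h₃ + h₆) / (-4)
  obtain rfl : a = -2 := by
    obtain ⟨h₁, -⟩ := eq_neg_one_of_add_neg h₁ h₄ (by linarith)
    linear_combination 2 * h₁
  obtain rfl : b = -2 := by
    obtain ⟨h₂, -⟩ := eq_neg_one_of_add_neg h₂ h₅ (by linarith)
    linear_combination 2 * h₂
  have hlam₇ : -(2 * (m : ℝ)) / (m + 1) < 0 := by
    have hm₀ : (0 : ℝ) < m := by exact_mod_cast hm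
    exact div_neg_of_neg_of_pos (by linarith) (by linarith)
  rw [Set.mem_insert_iff, Set.mem_singleton_iff] at h₇
  rcases h₇ with h₇ | h₇ <;> linarith
end

section
/- For every natural number m ≥ 1, let u₁ = (1,0), u₂ = (0,1), u₃ = (−1,1), u₄ = (−1,0), u₅ = (0,−1), u₆ = (1,−1), u₇ = (2,−1) in ℤ² and λ₁ = 0, λ₂ = 0, λ₃ = −2, λ₄ = −4, λ₅ = −4, λ₆ = −2, λ₇ = −2m/(m+1) (a rational number). Then 6 + 2m/(m+1) is the greatest element of the set { −Σ_{i=1}^{7} λ_i a_i : a = (a₁,…,a₇) ∈ ℕ⁷, Σ_{i=1}^{7} a_i u_i = (0,0) in ℤ², and 1 ≤ Σ_{i=1}^{7} a_i ≤ 3 } (it is an upper bound and it is attained, e.g. by a₃ = a₄ = a₇ = 1 and a₁ = a₂ = a₅ = a₆ = 0). -/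
/-!
Write `c = 2m/(m+1) ≥ 0`. For an admissible `a`, the value `-Σ λᵢ aᵢ` is
`2a₃ + 4a₄ + 4a₅ + 2a₆ + c·a₇` (indices from 1 as in the paper, so `a₇` is `a 6` below).
The first coordinate of the balancing condition reads `a₃ + a₄ = a₁ + a₆ + 2a₇`, so `a₇ ≥ 2` would force `Σ aᵢ ≥ 6`; hence `a₇ ≤ 1`, and
a short integer case analysis with `Σ aᵢ ≤ 3` bounds the remaining part by `6`. The bound is
attained by `a₃ = a₄ = a₇ = 1`.
-/

open Finset

namespace LuBound

/-- The values `-Σ λᵢ aᵢ` over `a ∈ ℕᵈ` with `Σ aᵢ uᵢ = 0` and `1 ≤ Σ aᵢ ≤ k`; for a polygon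
(`k = n + 1 = 3`) Lu's bound is `2π` times the greatest of them. -/
def luValues {d : ℕ} (u : Fin d → ℤ × ℤ) (lam : Fin d → ℝ) (k : ℕ) : Set ℝ :=
  { v : ℝ | ∃ a : Fin d → ℕ,
      (∑ i, (a i : ℤ) • u i) = (0, 0) ∧ 1 ≤ ∑ i, a i ∧ (∑ i, a i) ≤ k ∧
      v = -∑ i, lam i * (a i : ℝ) }

def normals : Fin 7 → ℤ × ℤ := ![(1, 0), (0, 1), (-1, 1), (-1, 0), (0, -1), (1, -1), (2, -1)]

def levels (c : ℝ) : Fin 7 → ℝ := ![0, 0, -2, -4, -4, -2, -c]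

theorem sum_smul_normals_eq_zero_iff (a : Fin 7 → ℕ) :
    (∑ i, (a i : ℤ) • normals i) = (0, 0) ↔
      a 0 + a 5 + 2 * a 6 = a 2 + a 3 ∧ a 1 + a 2 = a 4 + a 5 + a 6 := by
  simp only [Fin.sum_univ_seven, normals, Matrix.cons_val, Prod.smul_mk, smul_eq_mul,
    Prod.mk_add_mk, Prod.mk.injEq]
  omega

theorem neg_sum_levels_mul (c : ℝ) (a : Fin 7 → ℕ) :
    -∑ i, levels c i * (a i : ℝ) =
      2 * (a 2 : ℝ) + 4 * a 3 + 4 * a 4 + 2 * a 5 + c * a 6 := by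
  simp only [Fin.sum_univ_seven, levels, Matrix.cons_val]
  ring

theorem le_one_and_weight_le_six_of_balanced {a : Fin 7 → ℕ}
    (hbal : a 0 + a 5 + 2 * a 6 = a 2 + a 3 ∧ a 1 + a 2 = a 4 + a 5 + a 6)
    (hsum : ∑ i, a i ≤ 3) :
    a 6 ≤ 1 ∧ 2 * a 2 + 4 * a 3 + 4 * a 4 + 2 * a 5 ≤ 6 := by
  rw [Fin.sum_univ_seven] at hsum
  omega

theorem isGreatest_luValues_normals_levels {c : ℝ} (hc : 0 ≤ c) :
    IsGreatest (luValues normals (levels c) 3) (6 + c) := by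
  constructor
  · refine ⟨![0, 0, 1, 1, 0, 0, 1], (sum_smul_normals_eq_zero_iff _).2 (by simp), ?_, ?_, ?_⟩
    · simp [Fin.sum_univ_seven]
    · simp [Fin.sum_univ_seven]
    · rw [neg_sum_levels_mul]
      simp only [Matrix.cons_val]
      push_cast
      ring
  · rintro v ⟨a, hbal, -, hsum, rfl⟩
    obtain ⟨h6, hweight⟩ :=
      le_one_and_weight_le_six_of_balanced ((sum_smul_normals_eq_zero_iff a).1 hbal) hsum
    have h6' : (a 6 : ℝ) ≤ 1 := by exact_mod_cast h6
    have hweight' : 2 * (a 2 : ℝ) + 4 * a 3 + 4 * a 4 + 2 * a 5 ≤ 6 := by exact_mod_cast hweight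
    rw [neg_sum_levels_mul]
    linarith [mul_le_mul_of_nonneg_left h6' hc]

end LuBound

theorem stmt_10_general (m : ℕ) (u : Fin 7 → ℤ × ℤ) (lam : Fin 7 → ℝ)
    (hu : u = ![(1, 0), (0, 1), (-1, 1), (-1, 0), (0, -1), (1, -1), (2, -1)])
    (hlam : lam = ![0, 0, -2, -4, -4, -2, -(2 * (m : ℝ)) / ((m : ℝ) + 1)]) :
    IsGreatest
      { v : ℝ | ∃ a : Fin 7 → ℕ,
          (∑ i, (a i : ℤ) • u i) = (0, 0) ∧
          1 ≤ ∑ i, a i ∧ (∑ i, a i) ≤ 3 ∧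
          v = -∑ i, lam i * (a i : ℝ) }
      (6 + 2 * (m : ℝ) / ((m : ℝ) + 1)) := by
  rw [hu, hlam, neg_div]
  exact LuBound.isGreatest_luValues_normals_levels (by positivity)

/-- Computation of Lu's bound `Λ(Δ(m))/2π = 6 + 2m/(m+1)` for the polytope of
Example 2: for every `m ≥ 1`, `6 + 2m/(m+1)` is the greatest value of `-Σ λᵢ aᵢ`
over `a ∈ ℕ⁷` with `Σ aᵢ uᵢ = 0` and `1 ≤ Σ aᵢ ≤ 3`. -/
theorem stmt_10 (m : ℕ) (hm : 1 ≤ m) (u : Fin 7 → ℤ × ℤ) (lam : Fin 7 → ℝ)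
    (hu : u = ![(1, 0), (0, 1), (-1, 1), (-1, 0), (0, -1), (1, -1), (2, -1)])
    (hlam : lam = ![0, 0, -2, -4, -4, -2, -(2 * (m : ℝ)) / ((m : ℝ) + 1)]) :
    IsGreatest
      { v : ℝ | ∃ a : Fin 7 → ℕ,
          (∑ i, (a i : ℤ) • u i) = (0, 0) ∧
          1 ≤ ∑ i, a i ∧ (∑ i, a i) ≤ 3 ∧
          v = -∑ i, lam i * (a i : ℝ) }
      (6 + 2 * (m : ℝ) / ((m : ℝ) + 1)) :=
  stmt_10_general m u lam hu hlam
end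

section
/- Let n ≤ d and let u₁, …, u_d ∈ ℤⁿ be such that the n×n integer matrix U whose columns are u₁, …, uₙ lies in SL(n, ℤ) (so U⁻¹ has integer entries). Define the group homomorphism π : (ℂ*)^d → (ℂ*)^n by π(α₁,…,α_d) = ( ∏_{i=1}^{d} α_i^{u_{i1}}, …, ∏_{i=1}^{d} α_i^{u_{in}} ), where u_i = (u_{i1},…,u_{in}), and for j = n+1, …, d set v_j = U⁻¹ u_j ∈ ℤⁿ with coordinates v_{j1},…,v_{jn}. Then (α₁,…,α_d) ∈ ker π if and only if α_k = ∏_{j=n+1}^{d} α_j^{−v_{jk}} for every k = 1, …, n. In particular the map (ℂ*)^{d−n} → ker π sending (α_{n+1},…,α_d) to the d-tuple with these first n coordinates is a bijection onto ker π. -/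
/-!
Split `π α` into the factors coming from the basis `u₁, …, uₙ` and from the remaining `u_j`.
Writing `u_j = U v_j` gives `π α = U ⋆ γ`, where `U` acts on `(ℂ*)ⁿ` by monomial maps
`(U ⋆ γ)_k = ∏_l γ_l ^ U_{kl}` and `γ_l = α_l ∏_{j>n} α_j ^ v_{jl}`. Monomial maps compose like
matrices, so `U ⋆ ·` is inverted by `U⁻¹ ⋆ ·`, and `π α = 1` iff `γ = 1`, which is the stated
formula for `α_1, …, α_n`.
-/

open Finset

lemma zpow_finset_sum {G ι : Type*} [CommGroup G] (g : G) (s : Finset ι) (f : ι → ℤ) :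
    g ^ (∑ i ∈ s, f i) = ∏ i ∈ s, g ^ f i := by
  induction s using Finset.cons_induction with
  | empty => simp
  | cons a s ha ih => simp [zpow_add, ih]

lemma Fin.prod_univ_eq_prod_castLE_mul {M : Type*} [CommMonoid M] {n d : ℕ} (h : n ≤ d)
    (f : Fin d → M) :
    ∏ i, f i = (∏ l : Fin n, f (Fin.castLE h l)) * ∏ j : {j : Fin d // n ≤ (j : ℕ)}, f j := by
  rw [← Fintype.prod_subtype_mul_prod_subtype (fun j : Fin d => (j : ℕ) < n) f]
  congr 1
  · exact (Fintype.prod_equiv (Fin.castLEquiv h) _ _ fun _ => rfl).symm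
  · exact Fintype.prod_equiv (Equiv.subtypeEquivRight fun _ => not_lt) _ _ fun _ => rfl

section MonomialHom

variable {G : Type*} [CommGroup G] {ι κ μ : Type*} [Fintype ι]

/-- The monomial map `(ℤ-matrix) ⋆ γ`, the multiplicative form of `Matrix.mulVec`. -/
def monomialHom (M : Matrix κ ι ℤ) : (ι → G) →* (κ → G) where
  toFun γ k := ∏ l, γ l ^ M k l
  map_one' := by
    funext k
    simp
  map_mul' γ δ := by
    funext k
    simp [mul_zpow, prod_mul_distrib]

@[simp]
lemma monomialHom_apply (M : Matrix κ ι ℤ) (γ : ι → G) (k : κ) :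
    monomialHom M γ k = ∏ l, γ l ^ M k l := rfl

lemma monomialHom_matrix_mul [Fintype κ] (M : Matrix μ κ ℤ) (N : Matrix κ ι ℤ) (γ : ι → G) :
    monomialHom (M * N) γ = monomialHom M (monomialHom N γ) := by
  funext m
  simp only [monomialHom_apply, Matrix.mul_apply, zpow_finset_sum, ← prod_zpow, ← zpow_mul]
  rw [prod_comm]
  simp only [mul_comm]

lemma monomialHom_one [DecidableEq ι] (γ : ι → G) : monomialHom (1 : Matrix ι ι ℤ) γ = γ := by
  funext l
  simp [Matrix.one_apply]

lemma monomialHom_injective [DecidableEq ι] {U : Matrix ι ι ℤ} (hU : IsUnit U.det) :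
    Function.Injective (monomialHom (G := G) U) :=
  Function.LeftInverse.injective (g := monomialHom U⁻¹) fun γ => by
    rw [← monomialHom_matrix_mul, Matrix.nonsing_inv_mul U hU, monomialHom_one]

end MonomialHom

section KernelParametrization

variable {n d : ℕ} (hnd : n ≤ d)

lemma prod_zpow_eq_monomialHom {G : Type*} [CommGroup G] (u : Fin d → Fin n → ℤ)
    (U : Matrix (Fin n) (Fin n) ℤ) (hU : ∀ k i : Fin n, U k i = u (Fin.castLE hnd i) k)
    (v : Fin d → Fin n → ℤ) (hv : ∀ j : Fin d, n ≤ (j : ℕ) → U.mulVec (v j) = u j)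
    (α : Fin d → G) :
    (fun k => ∏ i, α i ^ u i k) = monomialHom U
      (fun l => α (Fin.castLE hnd l) * ∏ j : {j : Fin d // n ≤ (j : ℕ)}, α j ^ v j l) := by
  funext k
  rw [Fin.prod_univ_eq_prod_castLE_mul hnd, monomialHom_apply]
  simp only [mul_zpow, prod_mul_distrib]
  congr 1
  · simp [hU]
  · let w : Matrix (Fin n) {j : Fin d // n ≤ (j : ℕ)} ℤ := Matrix.of fun l j => v j l
    have huw : ∀ j : {j : Fin d // n ≤ (j : ℕ)}, u j k = (U * w) k j := fun j => by
      rw [← hv j j.2]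
      rfl
    calc ∏ j : {j : Fin d // n ≤ (j : ℕ)}, α j ^ u j k
        = monomialHom (U * w) (fun j => α j) k := by simp only [huw, monomialHom_apply]
      _ = monomialHom U (monomialHom w (fun j => α j)) k := by rw [monomialHom_matrix_mul]
      _ = _ := rfl

lemma prod_zpow_eq_one_iff {G : Type*} [CommGroup G] (u : Fin d → Fin n → ℤ)
    (U : Matrix (Fin n) (Fin n) ℤ) (hU : ∀ k i : Fin n, U k i = u (Fin.castLE hnd i) k)
    (hdet : IsUnit U.det)
    (v : Fin d → Fin n → ℤ) (hv : ∀ j : Fin d, n ≤ (j : ℕ) → U.mulVec (v j) = u j)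
    (α : Fin d → G) :
    (∀ k, ∏ i, α i ^ u i k = 1) ↔
      ∀ k : Fin n, α (Fin.castLE hnd k) = ∏ j : {j : Fin d // n ≤ (j : ℕ)}, α j ^ (-(v j k)) := by
  calc (∀ k, ∏ i, α i ^ u i k = 1) ↔ (fun k => ∏ i, α i ^ u i k) = 1 := funext_iff.symm
    _ ↔ (fun l => α (Fin.castLE hnd l) * ∏ j : {j : Fin d // n ≤ (j : ℕ)}, α j ^ v j l) = 1 := by
      rw [prod_zpow_eq_monomialHom hnd u U hU v hv, (monomialHom_injective hdet).eq_iff' (map_one _)]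
    _ ↔ _ := by
      simp only [funext_iff, Pi.one_apply, mul_eq_one_iff_eq_inv, zpow_neg, prod_inv_distrib]

lemma injective_and_range_eq_graph {X : Type*}
    (F : ({j : Fin d // n ≤ (j : ℕ)} → X) → Fin n → X)
    (Φ : ({j : Fin d // n ≤ (j : ℕ)} → X) → (Fin d → X))
    (hΦ : ∀ β i, Φ β i =
      if h : n ≤ (i : ℕ) then β ⟨i, h⟩ else F β ⟨(i : ℕ), Nat.lt_of_not_le h⟩) :
    Function.Injective Φ ∧
      Set.range Φ = {α | ∀ k, α (Fin.castLE hnd k) = F (fun j => α j) k} := by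
  have hrestrict : ∀ β, (fun j : {j : Fin d // n ≤ (j : ℕ)} => Φ β j) = β :=
    fun β => funext fun j => by rw [hΦ, dif_pos j.2]
  refine ⟨fun β β' h => by rw [← hrestrict β, ← hrestrict β', h], ?_⟩
  ext α
  constructor
  · rintro ⟨β, rfl⟩ k
    rw [hrestrict, hΦ, dif_neg (show ¬ n ≤ (Fin.castLE hnd k : ℕ) from not_le.2 k.isLt)]
    rfl
  · intro hα
    refine ⟨fun j => α j, funext fun i => ?_⟩
    rw [hΦ]
    split_ifs with h
    · rfl
    · exact (hα ⟨i, Nat.lt_of_not_le h⟩).symm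

end KernelParametrization

/-- Parametrization of the kernel of the monomial homomorphism
`π : (ℂ*)^d → (ℂ*)^n`, `π(α)_k = ∏ᵢ αᵢ^{u_{ik}}`, when the matrix `U` whose columns
are `u₁, …, uₙ` lies in `SL(n, ℤ)`: with `v_j = U⁻¹ u_j` for `j = n+1, …, d`,
`α ∈ ker π` iff `α_k = ∏_{j>n} α_j^{-v_{jk}}` for `k = 1, …, n`, and the induced
map `(ℂ*)^{d-n} → ker π` is a bijection onto `ker π`. -/
theorem stmt_13 (n d : ℕ) (hnd : n ≤ d)
    (u : Fin d → Fin n → ℤ)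
    (U : Matrix (Fin n) (Fin n) ℤ)
    (hU : ∀ k i : Fin n, U k i = u (Fin.castLE hnd i) k)
    (hdet : U.det = 1)
    (v : Fin d → Fin n → ℤ)
    (hv : ∀ j : Fin d, n ≤ (j : ℕ) → U.mulVec (v j) = u j)
    (π : (Fin d → ℂˣ) → (Fin n → ℂˣ))
    (hπ : ∀ α k, π α k = ∏ i, α i ^ (u i k))
    (Φ : ({j : Fin d // n ≤ (j : ℕ)} → ℂˣ) → (Fin d → ℂˣ))
    (hΦ : ∀ β i, Φ β i =
      if h : n ≤ (i : ℕ) then β ⟨i, h⟩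
      else ∏ j : {j : Fin d // n ≤ (j : ℕ)},
        β j ^ (-(v j.1 ⟨(i : ℕ), Nat.lt_of_not_le h⟩))) :
    (∀ α : Fin d → ℂˣ,
      (∀ k, π α k = 1) ↔
        ∀ k : Fin n, α (Fin.castLE hnd k)
          = ∏ j ∈ Finset.univ.filter (fun j : Fin d => n ≤ (j : ℕ)),
              α j ^ (-(v j k))) ∧
    Function.Injective Φ ∧
    Set.range Φ = { α : Fin d → ℂˣ | ∀ k, π α k = 1 } := by
  have hker : ∀ α, (∀ k, π α k = 1) ↔
      ∀ k, α (Fin.castLE hnd k) = ∏ j : {j : Fin d // n ≤ (j : ℕ)}, α j ^ (-(v j k)) :=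
    fun α => by simpa only [hπ] using prod_zpow_eq_one_iff hnd u U hU (hdet ▸ isUnit_one) v hv α
  obtain ⟨hinj, hrange⟩ := injective_and_range_eq_graph hnd
    (fun β k => ∏ j, β j ^ (-(v j.1 k))) Φ hΦ
  refine ⟨fun α => ?_, hinj, hrange.trans (Set.ext fun α => (hker α).symm)⟩
  rw [hker]
  simp only [Finset.prod_subtype _ (fun _ => Finset.mem_filter_univ _)]
end
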